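/- arXiv:1702.01347 — 2 statements merged into one kernel-verified Lean document; each statement's English description precedes it below -/
import Mathlib

section
/- Let (X, μ) be a measure space and let r, R, φ : X → ℝ be measurable functions with R, φ ∈ L⁴(μ). If the function x ↦ (−(r(x)+R(x)+φ(x))³ + φ(x)³)·r(x) is integrable with respect to μ, then ∫_X (−(r+R+φ)³ + φ³)·r dμ ≤ ‖R‖_{L⁴(μ)}⁴ + 3‖R‖_{L⁴(μ)}²·‖φ‖_{L⁴(μ)}². -/
/-!
Pointwise, `(-(r + R + φ)³ + φ³) r ≤ R⁴ + 3 R² φ²` is a polynomial inequality with a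
sum-of-squares certificate. Integrating it, `∫ R⁴ = ‖R‖₄⁴` and, by Hölder with
`1/2 = 1/4 + 1/4`, `∫ (R φ)² = ‖R φ‖₂² ≤ ‖R‖₄² ‖φ‖₄²`.
-/

open MeasureTheory ENNReal

/- With `d = a + b`, sixteen times the gap is
`(6ac + d(3a + 2b))² + 3(2(a + 2b)c + ad)² + (4b² - d²)² + d²(b - a)² + 2d⁴`. -/
theorem neg_add_cube_add_cube_mul_le (a b c : ℝ) :
    (-(a + b + c) ^ 3 + c ^ 3) * a ≤ b ^ 4 + 3 * b ^ 2 * c ^ 2 := by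
  nlinarith [sq_nonneg (6 * a * c + (a + b) * (3 * a + 2 * b)),
    sq_nonneg (2 * (a + 2 * b) * c + a * (a + b)), sq_nonneg (4 * b ^ 2 - (a + b) ^ 2),
    sq_nonneg ((a + b) * (b - a)), pow_two_nonneg ((a + b) ^ 2)]

instance ENNReal.HolderTriple.four_four_two : HolderTriple 4 4 2 where
  inv_add_inv_eq_inv := by
    rw [← two_mul, show (4 : ℝ≥0∞) = 2 * 2 by norm_num, ENNReal.mul_inv (by simp) (by simp),
      ← mul_assoc, ENNReal.mul_inv_cancel (by simp) (by simp), one_mul]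

namespace MeasureTheory

variable {X : Type*} [MeasurableSpace X] {μ : Measure X}

theorem MemLp.toReal_eLpNorm_pow {E : Type*} [NormedAddCommGroup E] {f : X → E} {n : ℕ}
    (hn : n ≠ 0) (hf : MemLp f n μ) :
    (eLpNorm f n μ).toReal ^ n = ∫ x, ‖f x‖ ^ n ∂μ := by
  rw [toReal_eLpNorm hf.1,
    lpNorm_eq_integral_norm_rpow_toReal (by exact_mod_cast hn) (by simp) hf.1]
  simp only [toReal_natCast, Real.rpow_natCast]
  exact Real.rpow_inv_natCast_pow (integral_nonneg fun x => by positivity) hn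

theorem MemLp.integrable_pow_of_even {f : X → ℝ} {n : ℕ} (hn : n ≠ 0) (he : Even n)
    (hf : MemLp f n μ) : Integrable (fun x => f x ^ n) μ := by
  simpa only [Real.norm_eq_abs, he.pow_abs] using hf.integrable_norm_pow hn

theorem MemLp.integral_pow_of_even {f : X → ℝ} {n : ℕ} (hn : n ≠ 0) (he : Even n)
    (hf : MemLp f n μ) : ∫ x, f x ^ n ∂μ = (eLpNorm f n μ).toReal ^ n := by
  simp only [hf.toReal_eLpNorm_pow hn, Real.norm_eq_abs, he.pow_abs]

theorem toReal_eLpNorm_mul_le {𝕜 : Type*} [NormedRing 𝕜] {p q r : ℝ≥0∞} [HolderTriple p q r]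
    {f g : X → 𝕜} (hf : MemLp f p μ) (hg : MemLp g q μ) :
    (eLpNorm (f * g) r μ).toReal ≤ (eLpNorm f p μ).toReal * (eLpNorm g q μ).toReal := by
  have holder : eLpNorm (f • g) r μ ≤ eLpNorm f p μ * eLpNorm g q μ :=
    eLpNorm_smul_le_mul_eLpNorm hg.1 hf.1
  rw [← toReal_mul]
  exact toReal_mono (mul_ne_top hf.eLpNorm_ne_top hg.eLpNorm_ne_top) holder

end MeasureTheory

theorem integrated_cubic_stability_general {X : Type*} [MeasurableSpace X] (μ : Measure X)
    (r R φ : X → ℝ)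
    (hR4 : MemLp R 4 μ) (hφ4 : MemLp φ 4 μ)
    (hint : Integrable (fun x => (-(r x + R x + φ x)^3 + (φ x)^3) * r x) μ) :
    ∫ x, (-(r x + R x + φ x)^3 + (φ x)^3) * r x ∂μ ≤
      (eLpNorm R 4 μ).toReal^4 +
        3 * (eLpNorm R 4 μ).toReal^2 * (eLpNorm φ 4 μ).toReal^2 := by
  have hR : MemLp R (4 : ℕ) μ := by exact_mod_cast hR4
  have hRφ : MemLp (R * φ) (2 : ℕ) μ := by exact_mod_cast hφ4.mul hR4
  have hR_int := hR.integrable_pow_of_even (by norm_num) (by decide)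
  have hRφ_int := (hRφ.integrable_pow_of_even (by norm_num) (by decide)).const_mul 3
  calc ∫ x, (-(r x + R x + φ x)^3 + (φ x)^3) * r x ∂μ
      ≤ ∫ x, (R x ^ 4 + 3 * (R * φ) x ^ 2) ∂μ := by
        refine integral_mono hint (hR_int.add hRφ_int) fun x => ?_
        simpa only [Pi.mul_apply, mul_pow, mul_assoc] using
          neg_add_cube_add_cube_mul_le (r x) (R x) (φ x)
    _ = (eLpNorm R 4 μ).toReal ^ 4 + 3 * (eLpNorm (R * φ) 2 μ).toReal ^ 2 := by
        rw [integral_add hR_int hRφ_int, integral_const_mul,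
          hR.integral_pow_of_even (by norm_num) (by decide),
          hRφ.integral_pow_of_even (by norm_num) (by decide)]
        norm_num
    _ ≤ (eLpNorm R 4 μ).toReal ^ 4 +
          3 * (eLpNorm R 4 μ).toReal ^ 2 * (eLpNorm φ 4 μ).toReal ^ 2 := by
        rw [mul_assoc, ← mul_pow]
        gcongr
        exact toReal_eLpNorm_mul_le hR4 hφ4

theorem integrated_cubic_stability {X : Type*} [MeasurableSpace X] (μ : Measure X)
    (r R φ : X → ℝ) (hr : Measurable r) (hR : Measurable R) (hφ : Measurable φ)
    (hR4 : MemLp R 4 μ) (hφ4 : MemLp φ 4 μ)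
    (hint : Integrable (fun x => (-(r x + R x + φ x)^3 + (φ x)^3) * r x) μ) :
    ∫ x, (-(r x + R x + φ x)^3 + (φ x)^3) * r x ∂μ ≤
      (eLpNorm R 4 μ).toReal^4 +
        3 * (eLpNorm R 4 μ).toReal^2 * (eLpNorm φ 4 μ).toReal^2 :=
  integrated_cubic_stability_general μ r R φ hR4 hφ4 hint
end

section
/- For every positive integer k and every real h > 0, 2k² · ∫₀^h (1 − e^{−2sk²})² (1 − e^{−2k²(h−s)})² ds ≤ 8hk²e^{−2hk²} + (2hk² + 3)e^{−4hk²} + 2hk² − 3. -/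
/-!
The bound holds with equality. Writing `b = k²` and `w = e^{-2hb}`, the integrand equals
`(1 - x)² (1 - w / x)²` with `x = e^{-2sb}`, i.e. a linear combination of `1`, `e^{±2sb}` and
`e^{±4sb}`, which integrates in closed form.
-/

open Real

lemma hasDerivAt_exp_mul_div {c : ℝ} (hc : c ≠ 0) (x : ℝ) :
    HasDerivAt (fun s => exp (c * s) / c) (exp (c * x)) x :=
  (((hasDerivAt_id x).const_mul c).exp.div_const c).congr_deriv (by field_simp; rfl)

lemma one_sub_exp_sq_mul_one_sub_exp_sq (b h s : ℝ) :
    (1 - exp (-2 * s * b)) ^ 2 * (1 - exp (-2 * b * (h - s))) ^ 2 =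
      (1 + 4 * exp (-2 * b * h) + exp (-2 * b * h) ^ 2)
        - 2 * (1 + exp (-2 * b * h)) * exp (-2 * b * s)
        - 2 * exp (-2 * b * h) * (1 + exp (-2 * b * h)) * exp (2 * b * s)
        + exp (-4 * b * s) + exp (-2 * b * h) ^ 2 * exp (4 * b * s) := by
  have h₁ : exp (-2 * s * b) = (exp (2 * b * s))⁻¹ := by rw [← exp_neg]; ring_nf
  have h₂ : exp (-2 * b * (h - s)) = exp (-2 * b * h) * exp (2 * b * s) := by
    rw [← exp_add]; ring_nf
  have h₃ : exp (-2 * b * s) = (exp (2 * b * s))⁻¹ := by rw [← exp_neg]; ring_nf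
  have h₄ : exp (-4 * b * s) = (exp (2 * b * s) ^ 2)⁻¹ := by
    rw [← exp_nat_mul, ← exp_neg]; ring_nf
  have h₅ : exp (4 * b * s) = exp (2 * b * s) ^ 2 := by rw [← exp_nat_mul]; ring_nf
  rw [h₁, h₂, h₃, h₄, h₅]
  field_simp
  ring

theorem mul_integral_one_sub_exp_sq_mul_one_sub_exp_sq (b h : ℝ) :
    2 * b * ∫ s in (0:ℝ)..h, (1 - exp (-2 * s * b)) ^ 2 * (1 - exp (-2 * b * (h - s))) ^ 2 =
      8 * h * b * exp (-2 * h * b) + (2 * h * b + 3) * exp (-4 * h * b) + 2 * h * b - 3 := by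
  rcases eq_or_ne b 0 with rfl | hb
  · simp
  set w := exp (-2 * b * h) with hw
  have hw₀ : w ≠ 0 := exp_ne_zero _
  set F : ℝ → ℝ := fun s => (1 + 4 * w + w ^ 2) * s
      - 2 * (1 + w) * (exp (-2 * b * s) / (-2 * b))
      - 2 * w * (1 + w) * (exp (2 * b * s) / (2 * b))
      + exp (-4 * b * s) / (-4 * b) + w ^ 2 * (exp (4 * b * s) / (4 * b)) with hF
  have hF' : ∀ s ∈ Set.uIcc 0 h,
      HasDerivAt F ((1 - exp (-2 * s * b)) ^ 2 * (1 - exp (-2 * b * (h - s))) ^ 2) s := by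
    intro s _
    rw [one_sub_exp_sq_mul_one_sub_exp_sq, ← hw]
    have hE {c : ℝ} (hc : c ≠ 0) := hasDerivAt_exp_mul_div hc s
    exact (((((hasDerivAt_id s).const_mul (1 + 4 * w + w ^ 2)).sub
      ((hE (c := -2 * b) (by simpa using hb)).const_mul (2 * (1 + w)))).sub
      ((hE (c := 2 * b) (by simpa using hb)).const_mul (2 * w * (1 + w)))).add
      (hE (c := -4 * b) (by simpa using hb))).add
      ((hE (c := 4 * b) (by simpa using hb)).const_mul (w ^ 2)) |>.congr_deriv (by ring)
  rw [intervalIntegral.integral_eq_sub_of_hasDerivAt hF'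
    (Continuous.intervalIntegrable (by fun_prop) _ _)]
  have e₁ : exp (-2 * h * b) = w := by rw [hw]; ring_nf
  have e₂ : exp (-4 * h * b) = w ^ 2 := by rw [hw, ← exp_nat_mul]; ring_nf
  have e₃ : exp (2 * b * h) = w⁻¹ := by rw [hw, ← exp_neg]; ring_nf
  have e₄ : exp (-4 * b * h) = w ^ 2 := by rw [hw, ← exp_nat_mul]; ring_nf
  have e₅ : exp (4 * b * h) = (w ^ 2)⁻¹ := by rw [← e₄, ← exp_neg]; ring_nf
  simp only [hF, mul_zero, exp_zero, e₃, e₄, e₅, ← hw, e₁, e₂]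
  field_simp
  ring

theorem OU_bridge_trace_integral_bound_general (k : ℕ) (h : ℝ) :
    2 * (k:ℝ)^2 * ∫ s in (0:ℝ)..h,
        (1 - Real.exp (-2 * s * (k:ℝ)^2))^2 * (1 - Real.exp (-2 * (k:ℝ)^2 * (h - s)))^2 ≤
      8 * h * (k:ℝ)^2 * Real.exp (-2 * h * (k:ℝ)^2)
        + (2 * h * (k:ℝ)^2 + 3) * Real.exp (-4 * h * (k:ℝ)^2)
        + 2 * h * (k:ℝ)^2 - 3 :=
  (mul_integral_one_sub_exp_sq_mul_one_sub_exp_sq _ h).le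

/-- Explicit integral bound in the proof of Lemma 3.6 of the paper. -/
theorem OU_bridge_trace_integral_bound (k : ℕ) (hk : 0 < k) (h : ℝ) (hh : 0 < h) :
    2 * (k:ℝ)^2 * ∫ s in (0:ℝ)..h,
        (1 - Real.exp (-2 * s * (k:ℝ)^2))^2 * (1 - Real.exp (-2 * (k:ℝ)^2 * (h - s)))^2 ≤
      8 * h * (k:ℝ)^2 * Real.exp (-2 * h * (k:ℝ)^2)
        + (2 * h * (k:ℝ)^2 + 3) * Real.exp (-4 * h * (k:ℝ)^2)
        + 2 * h * (k:ℝ)^2 - 3 :=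
  OU_bridge_trace_integral_bound_general k h
end
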